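/- Let B be a family of blocks in a monoid M with parameter type Θ and let n ≥ 1. For any two parameter assignments θ and φ for triangles of height n, there exists a parameter assignment ψ such that T_n(θ) * T_n(φ) = T_n(ψ); that is, two triangles of height n can be merged into a single triangle of height n. -/

import Mathlib

/-- The cascade `C_{i,j}(θ) = B i (θ i) * B (i+1) (θ (i+1)) * ⋯ * B j (θ j)`. -/
def cascade {M Θ : Type*} [Monoid M] (B : ℕ → Θ → M) (i j : ℕ) (θ : ℕ → Θ) : M :=
  ((List.range (j + 1 - i)).map (fun k => B (i + k) (θ (i + k)))).prod

/-- The triangle `T_n(θ) = C_{n,n} * C_{n-1,n} * ⋯ * C_{1,n}`, where the `k`-th cascade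
`C_{n-k,n}` carries its own parameters `θ k`. -/
def triangle {M Θ : Type*} [Monoid M] (B : ℕ → Θ → M) (n : ℕ) (θ : ℕ → ℕ → Θ) : M :=
  ((List.range n).map (fun k => cascade B (n - k) n (θ k))).prod

/-!
A triangle times a single block `B i α` with `1 ≤ i ≤ n` is again a triangle. On the last
cascade `C_{l,n}` of the triangle, the block `B n` fuses into the final block of the cascade,
while for `l ≤ i < n` a turnover followed by commutations moves it to the left of the cascade
as a block `B (i + 1)`, which the preceding cascades absorb in the same way. Consequently the
elements absorbed on the right by the set of triangles form a submonoid containing every such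
block, hence every cascade `C_{l,n}` with `l ≥ 1`, hence every triangle.

Stating everything for the sets `range (B i)`, `range (cascade B l n)`, … of all products of
a given shape removes the bookkeeping of parameters from the argument.
-/

open Set Pointwise

section Blocks

variable {M Θ : Type*} [Monoid M] (B : ℕ → Θ → M)

theorem Set.mul_comm_of_commute {s t : Set M} (h : ∀ a ∈ s, ∀ b ∈ t, Commute a b) :
    s * t = t * s := by
  ext x
  simp only [mem_mul]
  constructor <;> rintro ⟨a, ha, b, hb, rfl⟩
  · exact ⟨b, hb, a, ha, (h a ha b hb).eq.symm⟩
  · exact ⟨b, hb, a, ha, (h b hb a ha).eq⟩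

def Set.rightAbsorbers (s : Set M) : Submonoid M where
  carrier := {y | ∀ x ∈ s, x * y ∈ s}
  one_mem' x hx := by rwa [mul_one]
  mul_mem' hy hz x hx := mul_assoc x _ _ ▸ hz _ (hy x hx)

theorem Set.mem_rightAbsorbers {s : Set M} {y : M} :
    y ∈ s.rightAbsorbers ↔ ∀ x ∈ s, x * y ∈ s :=
  Iff.rfl

theorem cascade_congr {i j : ℕ} {θ θ' : ℕ → Θ} (h : ∀ k, i ≤ k → k ≤ j → θ k = θ' k) :
    cascade B i j θ = cascade B i j θ' := by
  refine congrArg List.prod (List.map_congr_left fun k hk => ?_)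
  rw [List.mem_range] at hk
  rw [h (i + k) (by omega) (by omega)]

theorem cascade_self (i : ℕ) (θ : ℕ → Θ) : cascade B i i θ = B i (θ i) := by
  simp [cascade]

theorem cascade_eq_mul_cascade_succ {i j : ℕ} (h : i ≤ j) (θ : ℕ → Θ) :
    cascade B i j θ = B i (θ i) * cascade B (i + 1) j θ := by
  rw [cascade, show j + 1 - i = j + 1 - (i + 1) + 1 by omega, List.range_succ_eq_map,
    List.map_cons, List.prod_cons, List.map_map, cascade]
  simp only [Function.comp_def, Nat.add_zero, Nat.add_right_comm i 1]
  rfl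

theorem range_cascade_self (i : ℕ) : range (cascade B i i) = range (B i) := by
  ext x
  constructor
  · rintro ⟨θ, rfl⟩
    exact ⟨θ i, (cascade_self B i θ).symm⟩
  · rintro ⟨α, rfl⟩
    exact ⟨fun _ => α, cascade_self B i _⟩

theorem range_cascade_eq_mul {i j : ℕ} (h : i ≤ j) :
    range (cascade B i j) = range (B i) * range (cascade B (i + 1) j) := by
  ext x
  simp only [mem_mul, mem_range]
  constructor
  · rintro ⟨θ, rfl⟩
    exact ⟨_, ⟨θ i, rfl⟩, _, ⟨θ, rfl⟩, (cascade_eq_mul_cascade_succ B h θ).symm⟩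
  · rintro ⟨_, ⟨α, rfl⟩, _, ⟨θ, rfl⟩, rfl⟩
    refine ⟨Function.update θ i α, ?_⟩
    rw [cascade_eq_mul_cascade_succ B h, Function.update_self,
      cascade_congr B fun k hk _ => Function.update_of_ne (by omega) α θ]

theorem range_cascade_mul_comm
    (hcomm : ∀ (i j : ℕ), 1 < Nat.dist i j → ∀ (α β : Θ), B i α * B j β = B j β * B i α)
    {i j m : ℕ} (hm : m + 2 ≤ i) :
    range (cascade B i j) * range (B m) = range (B m) * range (cascade B i j) := by
  refine Set.mul_comm_of_commute ?_
  rintro _ ⟨θ, rfl⟩ _ ⟨α, rfl⟩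
  refine Commute.list_prod_left _ _ fun y hy => ?_
  obtain ⟨k, -, rfl⟩ := List.mem_map.mp hy
  exact hcomm _ _ (by unfold Nat.dist; omega) _ _

theorem range_cascade_mul_range_subset
    {j : ℕ} (hfusion : range (B j) * range (B j) ⊆ range (B j)) {i : ℕ} (h : i ≤ j) :
    range (cascade B i j) * range (B j) ⊆ range (cascade B i j) := by
  induction h using Nat.decreasingInduction with
  | self => rwa [range_cascade_self]
  | of_succ k hk ih =>
    rw [range_cascade_eq_mul B hk.le, mul_assoc]
    exact mul_subset_mul_left ih

theorem range_cascade_mul_range_subset_of_lt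
    (hcomm : ∀ (i j : ℕ), 1 < Nat.dist i j → ∀ (α β : Θ), B i α * B j β = B j β * B i α)
    {i : ℕ} (hturnover : range (B i) * range (B (i + 1)) * range (B i) ⊆
      range (B (i + 1)) * range (B i) * range (B (i + 1)))
    {l n : ℕ} (hl : l ≤ i) (hi : i < n) :
    range (cascade B l n) * range (B i) ⊆ range (B (i + 1)) * range (cascade B l n) := by
  induction hl using Nat.decreasingInduction with
  | self =>
    calc range (cascade B i n) * range (B i)
        = range (B i) * range (B (i + 1)) * (range (cascade B (i + 2) n) * range (B i)) := by
          rw [range_cascade_eq_mul B hi.le, range_cascade_eq_mul B hi, mul_assoc, mul_assoc,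
            mul_assoc]
      _ = range (B i) * range (B (i + 1)) * range (B i) * range (cascade B (i + 2) n) := by
          rw [range_cascade_mul_comm B hcomm le_rfl]
          simp only [mul_assoc]
      _ ⊆ range (B (i + 1)) * range (B i) * range (B (i + 1)) * range (cascade B (i + 2) n) :=
          mul_subset_mul_right hturnover
      _ = range (B (i + 1)) * range (cascade B i n) := by
          rw [range_cascade_eq_mul B hi.le, range_cascade_eq_mul B hi, mul_assoc, mul_assoc]
  | of_succ k hk ih =>
    have hblocks : range (B k) * range (B (i + 1)) = range (B (i + 1)) * range (B k) := by
      refine Set.mul_comm_of_commute ?_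
      rintro _ ⟨α, rfl⟩ _ ⟨β, rfl⟩
      exact hcomm _ _ (by unfold Nat.dist; omega) _ _
    calc range (cascade B k n) * range (B i)
        = range (B k) * (range (cascade B (k + 1) n) * range (B i)) := by
          rw [range_cascade_eq_mul B (by omega), mul_assoc]
      _ ⊆ range (B k) * (range (B (i + 1)) * range (cascade B (k + 1) n)) :=
          mul_subset_mul_left ih
      _ = range (B (i + 1)) * range (cascade B k n) := by
          rw [← mul_assoc, hblocks, mul_assoc, ← range_cascade_eq_mul B (by omega)]

def partialTriangle (n m : ℕ) (θ : ℕ → ℕ → Θ) : M :=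
  ((List.range m).map fun k => cascade B (n - k) n (θ k)).prod

theorem triangle_eq_partialTriangle (n : ℕ) : triangle B n = partialTriangle B n n := rfl

theorem partialTriangle_succ (n m : ℕ) (θ : ℕ → ℕ → Θ) :
    partialTriangle B n (m + 1) θ = partialTriangle B n m θ * cascade B (n - m) n (θ m) := by
  simp [partialTriangle, List.range_succ]

theorem partialTriangle_congr {n m : ℕ} {θ θ' : ℕ → ℕ → Θ} (h : ∀ k < m, θ k = θ' k) :
    partialTriangle B n m θ = partialTriangle B n m θ' :=
  congrArg List.prod <| List.map_congr_left fun k hk => by rw [h k (List.mem_range.mp hk)]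

theorem range_partialTriangle_succ (n m : ℕ) :
    range (partialTriangle B n (m + 1)) =
      range (partialTriangle B n m) * range (cascade B (n - m) n) := by
  ext x
  simp only [mem_mul, mem_range]
  constructor
  · rintro ⟨θ, rfl⟩
    exact ⟨_, ⟨θ, rfl⟩, _, ⟨θ m, rfl⟩, (partialTriangle_succ B n m θ).symm⟩
  · rintro ⟨_, ⟨θ, rfl⟩, _, ⟨φ, rfl⟩, rfl⟩
    refine ⟨Function.update θ m φ, ?_⟩
    rw [partialTriangle_succ, Function.update_self,
      partialTriangle_congr B fun k hk => Function.update_of_ne hk.ne φ θ]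

theorem range_partialTriangle_mul_range_subset
    {n : ℕ} (hfusion : range (B n) * range (B n) ⊆ range (B n))
    (hcomm : ∀ (i j : ℕ), 1 < Nat.dist i j → ∀ (α β : Θ), B i α * B j β = B j β * B i α)
    (hturnover : ∀ i, range (B i) * range (B (i + 1)) * range (B i) ⊆
      range (B (i + 1)) * range (B i) * range (B (i + 1)))
    (m : ℕ) {i : ℕ} (hi : n - m < i) (hin : i ≤ n) :
    range (partialTriangle B n m) * range (B i) ⊆ range (partialTriangle B n m) := by
  induction m generalizing i with
  | zero => omega
  | succ m ih =>
    rw [range_partialTriangle_succ, mul_assoc]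
    rcases hin.eq_or_lt with rfl | hlt
    · exact mul_subset_mul_left (range_cascade_mul_range_subset B hfusion (Nat.sub_le _ _))
    · calc range (partialTriangle B n m) * (range (cascade B (n - m) n) * range (B i))
          ⊆ range (partialTriangle B n m) * (range (B (i + 1)) * range (cascade B (n - m) n)) :=
            mul_subset_mul_left <|
              range_cascade_mul_range_subset_of_lt B hcomm (hturnover i) (by omega) hlt
        _ ⊆ range (partialTriangle B n m) * range (cascade B (n - m) n) := by
            rw [← mul_assoc]
            exact mul_subset_mul_right (ih (by omega) hlt)

theorem range_triangle_mul_range_triangle_subset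
    {n : ℕ} (hfusion : range (B n) * range (B n) ⊆ range (B n))
    (hcomm : ∀ (i j : ℕ), 1 < Nat.dist i j → ∀ (α β : Θ), B i α * B j β = B j β * B i α)
    (hturnover : ∀ i, range (B i) * range (B (i + 1)) * range (B i) ⊆
      range (B (i + 1)) * range (B i) * range (B (i + 1))) :
    range (triangle B n) * range (triangle B n) ⊆ range (triangle B n) := by
  have hblock : ∀ i, 1 ≤ i → i ≤ n → ∀ α, B i α ∈ (range (triangle B n)).rightAbsorbers :=
    fun i h1 h2 α => mem_rightAbsorbers.mpr fun x hx => by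
      rw [triangle_eq_partialTriangle] at hx ⊢
      exact range_partialTriangle_mul_range_subset B hfusion hcomm hturnover n (by omega) h2
        (mul_mem_mul hx (mem_range_self α))
  have hcascade : ∀ l, 1 ≤ l → ∀ θ, cascade B l n θ ∈ (range (triangle B n)).rightAbsorbers :=
    fun l hl θ => Submonoid.list_prod_mem _ fun y hy => by
      obtain ⟨k, hk, rfl⟩ := List.mem_map.mp hy
      exact hblock _ (by omega) (by rw [List.mem_range] at hk; omega) _
  rw [mul_subset_iff]
  rintro x hx _ ⟨φ, rfl⟩
  refine mem_rightAbsorbers.mp (Submonoid.list_prod_mem _ fun y hy => ?_) x hx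
  obtain ⟨k, hk, rfl⟩ := List.mem_map.mp hy
  exact hcascade _ (by rw [List.mem_range] at hk; omega) _

end Blocks

theorem triangle_absorbs_triangle_general {M Θ : Type*} [Monoid M] (B : ℕ → Θ → M)
    (hfusion : ∀ (i : ℕ) (α β : Θ), ∃ a : Θ, B i α * B i β = B i a)
    (hcomm : ∀ (i j : ℕ), 1 < Nat.dist i j → ∀ (α β : Θ),
      B i α * B j β = B j β * B i α)
    (hturnover : ∀ (i : ℕ) (α β γ : Θ), ∃ a b c : Θ,
      B i α * B (i + 1) β * B i γ = B (i + 1) a * B i b * B (i + 1) c)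
    (n : ℕ) :
    ∀ (θ φ : ℕ → ℕ → Θ), ∃ ψ : ℕ → ℕ → Θ,
      triangle B n θ * triangle B n φ = triangle B n ψ := by
  have hfusion' : range (B n) * range (B n) ⊆ range (B n) := by
    rintro _ ⟨_, ⟨α, rfl⟩, _, ⟨β, rfl⟩, rfl⟩
    obtain ⟨a, ha⟩ := hfusion n α β
    exact ⟨a, ha.symm⟩
  have hturnover' : ∀ i, range (B i) * range (B (i + 1)) * range (B i) ⊆
      range (B (i + 1)) * range (B i) * range (B (i + 1)) := by
    rintro i _ ⟨_, ⟨_, ⟨α, rfl⟩, _, ⟨β, rfl⟩, rfl⟩, _, ⟨γ, rfl⟩, rfl⟩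
    obtain ⟨a, b, c, habc⟩ := hturnover i α β γ
    show B i α * B (i + 1) β * B i γ ∈ _
    rw [habc]
    exact mul_mem_mul (mul_mem_mul (mem_range_self a) (mem_range_self b)) (mem_range_self c)
  intro θ φ
  obtain ⟨ψ, hψ⟩ := range_triangle_mul_range_triangle_subset B hfusion' hcomm hturnover'
    (mul_mem_mul (mem_range_self θ) (mem_range_self φ))
  exact ⟨ψ, hψ.symm⟩

/-- **Corollary (triangle absorbs triangle).**  Let `B` be a family of blocks in a monoid `M`
(satisfying fusion, commutation and turnover) and `n ≥ 1`.  Two triangles of height `n`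
can be merged into a single triangle of height `n`. -/
theorem triangle_absorbs_triangle {M Θ : Type*} [Monoid M] (B : ℕ → Θ → M)
    (hfusion : ∀ (i : ℕ) (α β : Θ), ∃ a : Θ, B i α * B i β = B i a)
    (hcomm : ∀ (i j : ℕ), 1 < Nat.dist i j → ∀ (α β : Θ),
      B i α * B j β = B j β * B i α)
    (hturnover : ∀ (i : ℕ) (α β γ : Θ), ∃ a b c : Θ,
      B i α * B (i + 1) β * B i γ = B (i + 1) a * B i b * B (i + 1) c)
    (n : ℕ) (hn : 1 ≤ n) :
    ∀ (θ φ : ℕ → ℕ → Θ), ∃ ψ : ℕ → ℕ → Θ,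
      triangle B n θ * triangle B n φ = triangle B n ψ :=
  triangle_absorbs_triangle_general B hfusion hcomm hturnover n
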